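/- Let C be a finite set of class labels with |C| ≥ 2, let {M_c}_{c∈C} be a POVM on ℂ^N, and let ρ be a density matrix on ℂ^N. Set p_c := Tr[M_c ρ] and let c* ∈ C satisfy p_{c*} ≥ p_c for all c ∈ C. Then for every density matrix σ on ℂ^N with 1 − F(ρ, σ) ≤ min_{c ≠ c*} (1/2)(√(p_{c*}) − √(p_c))², it holds that Tr[M_{c*} σ] ≥ Tr[M_c σ] for every c ≠ c*. -/

import Mathlib

open Matrix
open scoped ComplexOrder

/-- Positive-semidefinite square root of a matrix (zero if not PSD). -/
noncomputable def psdSqrt {N : ℕ} (A : Matrix (Fin N) (Fin N) ℂ) :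
    Matrix (Fin N) (Fin N) ℂ :=
  open scoped Classical in
  if h : A.PosSemidef then
    (h.1.eigenvectorUnitary : Matrix (Fin N) (Fin N) ℂ) *
      diagonal ((↑) ∘ (√·) ∘ h.1.eigenvalues) *
      (star h.1.eigenvectorUnitary : Matrix (Fin N) (Fin N) ℂ)
  else 0

/-- Root fidelity `Tr √(√ρ σ √ρ)`. -/
noncomputable def rootFidelity {N : ℕ} (ρ σ : Matrix (Fin N) (Fin N) ℂ) : ℝ :=
  (psdSqrt (psdSqrt ρ * σ * psdSqrt ρ)).trace.re

/-- Fidelity `F(ρ,σ) = (Tr √(√ρ σ √ρ))²`. -/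
noncomputable def fidelity {N : ℕ} (ρ σ : Matrix (Fin N) (Fin N) ℂ) : ℝ :=
  (rootFidelity ρ σ) ^ 2

/-- A density matrix: positive semidefinite with trace one. -/
def IsDensityMatrix {N : ℕ} (ρ : Matrix (Fin N) (Fin N) ℂ) : Prop :=
  ρ.PosSemidef ∧ ρ.trace = 1

/-- A POVM: a family of PSD matrices summing to the identity. -/
def IsPOVM {N : ℕ} {C : Type*} [Fintype C] (M : C → Matrix (Fin N) (Fin N) ℂ) : Prop :=
  (∀ c, (M c).PosSemidef) ∧ ∑ c, M c = 1

/-- A Kraus family: `∑ Eₖᴴ Eₖ = I`. -/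
def IsKrausFamily {N : ℕ} {K : Type*} [Fintype K] (E : K → Matrix (Fin N) (Fin N) ℂ) : Prop :=
  ∑ k, (E k)ᴴ * E k = 1

/-- The quantum channel associated with a Kraus family. -/
noncomputable def channel {N : ℕ} {K : Type*} [Fintype K]
    (E : K → Matrix (Fin N) (Fin N) ℂ) (σ : Matrix (Fin N) (Fin N) ℂ) :
    Matrix (Fin N) (Fin N) ℂ :=
  ∑ k, E k * σ * (E k)ᴴ

/-- Minimum of `f` over all labels distinct from `cstar` (needs `|C| ≥ 2`). -/
noncomputable def minErase {C : Type*} [Fintype C] [DecidableEq C] {α : Type*} [LinearOrder α]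
    (cstar : C) (h : 1 < Fintype.card C) (f : C → α) : α :=
  (Finset.univ.erase cstar).inf'
    ((Finset.erase_nonempty (Finset.mem_univ cstar)).mpr
      (Finset.one_lt_card_iff_nontrivial.mp (by simpa [Finset.card_univ] using h))) f

/-! Measuring cannot increase the fidelity: with `σ = Tᴴ T` and `B = T √ρ` one has
`√F(ρ, σ) = Tr |B| = Tr (U B)` for a contraction `U`, and splitting `B = ∑_c T M_c √ρ` and
applying Cauchy–Schwarz to each term gives `√F(ρ, σ) ≤ ∑_c √p_c √q_c` with `q_c = Tr[M_c σ]`.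
If `q_c > q_{c*}`, the unit vectors `√p` and `√q` of `ℝ^C` lie on opposite sides of the hyperplane
orthogonal to `w = (e_{c*} - e_c)/√2`, so the angle between them exceeds the angle from `√p` to
that hyperplane, whose sine is `⟪√p, w⟫ = (√p_{c*} - √p_c)/√2`. -/

open scoped MatrixOrder RealInnerProductSpace

namespace Matrix

variable {m n 𝕜 : Type*} [RCLike 𝕜] [Fintype m] [Fintype n]

theorem norm_trace_conjTranspose_mul_le (A B : Matrix m n 𝕜) :
    ‖(Aᴴ * B).trace‖ ≤ √(RCLike.re (Aᴴ * A).trace) * √(RCLike.re (Bᴴ * B).trace) := by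
  have trace_eq_inner (X Y : Matrix m n 𝕜) :
      (Xᴴ * Y).trace = inner 𝕜 (WithLp.toLp 2 X.vec) (WithLp.toLp 2 Y.vec) := by
    rw [EuclideanSpace.inner_eq_star_dotProduct, dotProduct_comm, ← star_vec_dotProduct_vec]
  rw [trace_eq_inner, trace_eq_inner, trace_eq_inner, ← norm_eq_sqrt_re_inner,
    ← norm_eq_sqrt_re_inner]
  exact norm_inner_le_norm _ _

theorem re_trace_conjTranspose_mul_mul_le [DecidableEq m] {U : Matrix m m 𝕜} (hU : U * Uᴴ ≤ 1)
    (X Y : Matrix m n 𝕜) :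
    RCLike.re (Xᴴ * U * Y).trace ≤
      √(RCLike.re (Xᴴ * X).trace) * √(RCLike.re (Yᴴ * Y).trace) := by
  have hUX : RCLike.re ((Uᴴ * X)ᴴ * (Uᴴ * X)).trace ≤ RCLike.re (Xᴴ * X).trace := by
    have := ((le_iff.mp hU).conjTranspose_mul_mul_same X).trace_nonneg
    rw [Matrix.mul_sub, Matrix.sub_mul, trace_sub, sub_nonneg, Matrix.mul_one] at this
    simpa [Matrix.mul_assoc] using RCLike.re_le_re this
  calc RCLike.re (Xᴴ * U * Y).trace ≤ ‖((Uᴴ * X)ᴴ * Y).trace‖ := by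
        simpa [Matrix.mul_assoc] using RCLike.re_le_norm _
    _ ≤ _ := (norm_trace_conjTranspose_mul_le _ _).trans <|
        mul_le_mul_of_nonneg_right (Real.sqrt_le_sqrt hUX) (Real.sqrt_nonneg _)

theorem trace_conjTranspose_mul_conjTranspose (A X : Matrix m n 𝕜) :
    ((A * Xᴴ)ᴴ * (A * Xᴴ)).trace = (Xᴴ * X * (Aᴴ * A)).trace := by
  rw [conjTranspose_mul, conjTranspose_conjTranspose, Matrix.mul_assoc, trace_mul_comm,
    Matrix.mul_assoc, Matrix.mul_assoc, ← Matrix.mul_assoc, trace_mul_comm]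

theorem PosSemidef.trace_mul_nonneg {A B : Matrix n n 𝕜} (hA : A.PosSemidef)
    (hB : B.PosSemidef) : 0 ≤ (A * B).trace := by
  classical
  obtain ⟨X, rfl⟩ := CStarAlgebra.nonneg_iff_eq_star_mul_self.mp hB.nonneg
  rw [star_eq_conjTranspose, ← Matrix.mul_assoc, trace_mul_comm, ← Matrix.mul_assoc]
  exact (hA.mul_mul_conjTranspose_same X).trace_nonneg

variable [DecidableEq n]

theorem exists_contraction_mul_eq_abs (B : Matrix n n 𝕜) :
    ∃ U : Matrix n n 𝕜, U * B = CFC.abs B ∧ U * Uᴴ ≤ 1 := by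
  set H := Bᴴ * B
  have hH : IsSelfAdjoint H := (posSemidef_conjTranspose_mul_self B).isHermitian
  have hcont (f : ℝ → ℝ) : ContinuousOn f (spectrum ℝ H) :=
    (finite_real_spectrum (A := H)).continuousOn f
  -- `G = |B|⁻¹` on the support of `|B|`, thanks to `0⁻¹ = 0`
  set G := cfc (fun x : ℝ => (√x)⁻¹) H
  have hG : Gᴴ = G := IsSelfAdjoint.cfc
  refine ⟨G * Bᴴ, ?_, ?_⟩
  · have hGH : G * H = cfc (fun x : ℝ => (√x)⁻¹ * x) H := by
      rw [cfc_mul _ _ H (hcont _) (hcont _), cfc_id' ℝ H]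
    rw [Matrix.mul_assoc, hGH, CFC.abs, star_eq_conjTranspose,
      CFC.sqrt_eq_real_sqrt _ (posSemidef_conjTranspose_mul_self B).nonneg, cfcₙ_eq_cfc]
    exact cfc_congr fun x _ => by rw [inv_mul_eq_div, Real.div_sqrt]
  · have hGHG : G * H * G = cfc (fun x : ℝ => (√x)⁻¹ * x * (√x)⁻¹) H := by
      rw [cfc_mul _ _ H (hcont _) (hcont _), cfc_mul _ _ H (hcont _) (hcont _), cfc_id' ℝ H]
    have hUU : G * Bᴴ * (G * Bᴴ)ᴴ = G * H * G := by
      rw [conjTranspose_mul, conjTranspose_conjTranspose, hG]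
      simp only [H, Matrix.mul_assoc]
    rw [hUU, hGHG]
    refine cfc_le_one _ _ fun x _ => ?_
    rw [inv_mul_eq_div, Real.div_sqrt]
    exact mul_inv_le_one

end Matrix

theorem psdSqrt_eq_sqrt {N : ℕ} {A : Matrix (Fin N) (Fin N) ℂ} (hA : A.PosSemidef) :
    psdSqrt A = CFC.sqrt A := by
  rw [psdSqrt, dif_pos hA, CFC.sqrt_eq_real_sqrt A hA.nonneg, cfcₙ_eq_cfc, hA.1.cfc_eq]
  rfl

theorem posSemidef_psdSqrt {N : ℕ} (A : Matrix (Fin N) (Fin N) ℂ) : (psdSqrt A).PosSemidef := by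
  by_cases hA : A.PosSemidef
  · rw [psdSqrt_eq_sqrt hA]
    exact (CFC.sqrt_nonneg A).posSemidef
  · rw [psdSqrt, dif_neg hA]
    exact .zero

theorem rootFidelity_nonneg {N : ℕ} (ρ σ : Matrix (Fin N) (Fin N) ℂ) : 0 ≤ rootFidelity ρ σ :=
  (Complex.nonneg_iff.mp (posSemidef_psdSqrt _).trace_nonneg).1

section POVM

variable {N : ℕ} {C : Type*} [Fintype C] {M : C → Matrix (Fin N) (Fin N) ℂ}

theorem IsPOVM.sum_trace_mul (hM : IsPOVM M) (ρ : Matrix (Fin N) (Fin N) ℂ) :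
    ∑ c, (M c * ρ).trace = ρ.trace := by
  rw [← trace_sum, ← Finset.sum_mul, hM.2, Matrix.one_mul]

theorem IsPOVM.sum_re_trace_mul (hM : IsPOVM M) {ρ : Matrix (Fin N) (Fin N) ℂ}
    (hρ : IsDensityMatrix ρ) : ∑ c, (M c * ρ).trace.re = 1 := by
  rw [← Complex.re_sum, hM.sum_trace_mul, hρ.2, Complex.one_re]

theorem rootFidelity_le_sum_sqrt_mul_sqrt (hM : IsPOVM M) {ρ σ : Matrix (Fin N) (Fin N) ℂ}
    (hρ : ρ.PosSemidef) (hσ : σ.PosSemidef) :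
    rootFidelity ρ σ ≤ ∑ c, √((M c * ρ).trace.re) * √((M c * σ).trace.re) := by
  set S := psdSqrt ρ
  have hS : Sᴴ = S := (posSemidef_psdSqrt ρ).isHermitian
  have hSS : Sᴴ * S = ρ := by
    rw [hS, show S = CFC.sqrt ρ from psdSqrt_eq_sqrt hρ, CFC.sqrt_mul_sqrt_self ρ hρ.nonneg]
  obtain ⟨T, rfl⟩ := CStarAlgebra.nonneg_iff_eq_star_mul_self.mp hσ.nonneg
  rw [star_eq_conjTranspose] at *
  obtain ⟨U, hUB, hU⟩ := exists_contraction_mul_eq_abs (T * S)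
  have hRF : rootFidelity ρ (Tᴴ * T) = (U * (T * S)).trace.re := by
    have hB : S * (Tᴴ * T) * S = (T * S)ᴴ * (T * S) := by
      rw [conjTranspose_mul, hS]
      simp only [Matrix.mul_assoc]
    rw [rootFidelity, hB, psdSqrt_eq_sqrt (posSemidef_conjTranspose_mul_self _), hUB]
    rfl
  have hsplit : U * (T * S) = ∑ c, U * T * M c * S := by
    rw [← Finset.sum_mul, ← Finset.mul_sum, hM.2, Matrix.mul_one, Matrix.mul_assoc]
  rw [hRF, hsplit, trace_sum, Complex.re_sum]
  refine Finset.sum_le_sum fun c _ => ?_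
  obtain ⟨X, hX⟩ := CStarAlgebra.nonneg_iff_eq_star_mul_self.mp (hM.1 c).nonneg
  rw [star_eq_conjTranspose] at hX
  have hcyc : (U * T * M c * S).trace = ((S * Xᴴ)ᴴ * U * (T * Xᴴ)).trace := by
    rw [hX, conjTranspose_mul, conjTranspose_conjTranspose, hS]
    simpa only [Matrix.mul_assoc] using trace_mul_comm (U * T * Xᴴ) (X * S)
  rw [hcyc, ← hSS, hX, ← trace_conjTranspose_mul_conjTranspose,
    ← trace_conjTranspose_mul_conjTranspose]
  exact re_trace_conjTranspose_mul_mul_le hU _ _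

end POVM

theorem inner_sq_lt_one_sub_inner_sq {E : Type*} [NormedAddCommGroup E] [InnerProductSpace ℝ E]
    {u v w : E} (hu : ‖u‖ = 1) (hv : ‖v‖ = 1) (hw : ‖w‖ = 1)
    (huw : 0 ≤ ⟪u, w⟫) (hvw : ⟪v, w⟫ < 0) (huv : 0 ≤ ⟪u, v⟫) :
    ⟪u, v⟫ ^ 2 < 1 - ⟪u, w⟫ ^ 2 := by
  set s := ⟪u, w⟫
  set t := ⟪v, w⟫
  have hww : ⟪w, w⟫ = 1 := by rw [real_inner_self_eq_norm_sq, hw, one_pow]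
  have hu' : ‖u - s • w‖ ^ 2 = 1 - s ^ 2 := by
    rw [norm_sub_sq_real, hu, norm_smul, hw, real_inner_smul_right, Real.norm_eq_abs, mul_one,
      sq_abs]
    ring
  have hv' : ‖v - t • w‖ ^ 2 = 1 - t ^ 2 := by
    rw [norm_sub_sq_real, hv, norm_smul, hw, real_inner_smul_right, Real.norm_eq_abs, mul_one,
      sq_abs]
    ring
  have hproj : ⟪u - s • w, v - t • w⟫ = ⟪u, v⟫ - s * t := by
    simp only [inner_sub_left, inner_sub_right, real_inner_smul_left, real_inner_smul_right, hww,
      real_inner_comm w u, real_inner_comm w v, s, t]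
    ring
  set r := ‖u - s • w‖ * ‖v - t • w‖
  have hr : ⟪u, v⟫ ≤ s * t + r := by linarith [real_inner_le_norm (u - s • w) (v - t • w)]
  have hr0 : 0 ≤ r := by positivity
  have hr2 : r ^ 2 = (1 - s ^ 2) * (1 - t ^ 2) := by rw [mul_pow, hu', hv']
  -- by `hr2`, `1 - s² - (st + r)² = (-t) (2s (st + r) - t)`
  nlinarith [mul_pos (neg_pos.mpr hvw) (by nlinarith : 0 < 2 * s * (s * t + r) - t)]

theorem sq_sum_sqrt_mul_sqrt_lt {ι : Type*} [Fintype ι] [DecidableEq ι] {p q : ι → ℝ}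
    (hp : ∀ i, 0 ≤ p i) (hq : ∀ i, 0 ≤ q i) (hp1 : ∑ i, p i = 1) (hq1 : ∑ i, q i = 1)
    {i j : ι} (hpij : p j ≤ p i) (hqij : q i < q j) :
    (∑ k, √(p k) * √(q k)) ^ 2 < 1 - (√(p i) - √(p j)) ^ 2 / 2 := by
  have hij : i ≠ j := by rintro rfl; exact hqij.false
  let amp (f : ι → ℝ) : EuclideanSpace ℝ ι := WithLp.toLp 2 fun k => √(f k)
  have inner_amp (f g : ι → ℝ) : ⟪amp f, amp g⟫ = ∑ k, √(f k) * √(g k) := by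
    simp [amp, EuclideanSpace.inner_eq_star_dotProduct, dotProduct, mul_comm]
  have norm_amp {f : ι → ℝ} (hf : ∀ k, 0 ≤ f k) (hf1 : ∑ k, f k = 1) : ‖amp f‖ = 1 := by
    rw [norm_eq_sqrt_real_inner, inner_amp]
    simp [Real.mul_self_sqrt (hf _), hf1]
  let w : EuclideanSpace ℝ ι :=
    (√2)⁻¹ • (EuclideanSpace.single i 1 - EuclideanSpace.single j 1)
  have inner_w (f : ι → ℝ) : ⟪amp f, w⟫ = (√(f i) - √(f j)) / √2 := by
    simp only [w, amp, inner_smul_right, inner_sub_right, EuclideanSpace.inner_single_right,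
      Real.ringHom_apply, one_mul]
    ring
  have hw : ‖w‖ = 1 := by
    have h2 : ‖EuclideanSpace.single i (1 : ℝ) - EuclideanSpace.single j 1‖ ^ 2 = 2 := by
      rw [norm_sub_sq_real]
      norm_num [EuclideanSpace.inner_single_left, hij.symm]
    rw [← pow_eq_one_iff_of_nonneg (norm_nonneg _) two_ne_zero, norm_smul, mul_pow, h2,
      norm_inv, inv_pow, Real.norm_of_nonneg (Real.sqrt_nonneg _), Real.sq_sqrt zero_le_two,
      inv_mul_cancel₀ two_ne_zero]
  have key := inner_sq_lt_one_sub_inner_sq (norm_amp hp hp1) (norm_amp hq hq1) hw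
    (by rw [inner_w]; exact div_nonneg (sub_nonneg.mpr (Real.sqrt_le_sqrt hpij)) (by positivity))
    (by
      rw [inner_w]
      exact div_neg_of_neg_of_pos (sub_neg.mpr (Real.sqrt_lt_sqrt (hq i) hqij)) (by positivity))
    (by rw [inner_amp]; positivity)
  rwa [inner_amp, inner_w, div_pow, Real.sq_sqrt zero_le_two] at key

/-- **Robustness lower bound for a measurement-only classifier.**
If the fidelity distance from ρ to σ is at most
`min_{c ≠ c*} (1/2)(√p_{c*} − √p_c)²`, then the prediction does not change. -/
theorem robustness_lower_bound_measurement
    {N : ℕ} {C : Type*} [Fintype C] [DecidableEq C]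
    (hC : 1 < Fintype.card C)
    (M : C → Matrix (Fin N) (Fin N) ℂ) (hM : IsPOVM M)
    (ρ : Matrix (Fin N) (Fin N) ℂ) (hρ : IsDensityMatrix ρ)
    (p : C → ℝ) (hp : ∀ c, (p c : ℂ) = (M c * ρ).trace)
    (cstar : C) (hcstar : ∀ c, p c ≤ p cstar)
    (σ : Matrix (Fin N) (Fin N) ℂ) (hσ : IsDensityMatrix σ)
    (hclose : 1 - fidelity ρ σ ≤
      minErase cstar hC fun c => (1 / 2) * (Real.sqrt (p cstar) - Real.sqrt (p c)) ^ 2) :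
    ∀ c, c ≠ cstar → (M c * σ).trace ≤ (M cstar * σ).trace := by
  obtain rfl : p = fun c => (M c * ρ).trace.re := funext fun c => by rw [← hp c, Complex.ofReal_re]
  have hprob {τ : Matrix (Fin N) (Fin N) ℂ} (hτ : τ.PosSemidef) (c : C) :
      0 ≤ (M c * τ).trace.re ∧ 0 = (M c * τ).trace.im :=
    Complex.nonneg_iff.mp ((hM.1 c).trace_mul_nonneg hτ)
  intro c hc
  refine Complex.le_def.mpr ⟨?_, (hprob hσ.1 c).2.symm.trans (hprob hσ.1 cstar).2⟩
  by_contra! hlt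
  have hBC := sq_sum_sqrt_mul_sqrt_lt (fun c => (hprob hρ.1 c).1) (fun c => (hprob hσ.1 c).1)
    (hM.sum_re_trace_mul hρ) (hM.sum_re_trace_mul hσ) (hcstar c) hlt
  have hRF := pow_le_pow_left₀ (rootFidelity_nonneg ρ σ)
    (rootFidelity_le_sum_sqrt_mul_sqrt hM hρ.1 hσ.1) 2
  have hclose' := hclose.trans (Finset.inf'_le _ (Finset.mem_erase.mpr ⟨hc, Finset.mem_univ c⟩))
  unfold fidelity at hclose'
  linarith
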